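/- Let α > 1 and σ > 0 be real numbers, set s = 2σ/(α−1), and let λ ≥ 0 be a real number with λ + s > 1/2. There exists a constant C = C(α, σ, λ) > 0 with the following property. Let (c_n)_{n∈ℤ} be a family of integrable functions c_n : ℝ → ℂ, let ĉ_n(τ) = ∫_ℝ c_n(t) e^{−itτ} dt denote their Fourier transforms, and set Γ_n = sup_{τ∈ℝ} ⟨τ⟩^s |ĉ_n(τ)|. Then for all families (a_n)_{n∈ℤ} and (b_n)_{n∈ℤ} of complex numbers with Σ_n ⟨n⟩^{−2σ}|a_n|² < ∞ and Σ_n ⟨n⟩^{−2σ}|b_n|² < ∞, one has Σ_{(n₁,n₂) ∈ ℤ², n₁ ≠ n₂} | ĉ_{n₂ − n₁}( |n₂|^α − |n₁|^α ) | · |a_{n₁}| · |b_{n₂}| ≤ C ( sup_{n∈ℤ} ⟨n⟩^{2σ} Γ_n + ( Σ_{n∈ℤ} ⟨n⟩^{2λ} Γ_n² )^{1/2} ) ( Σ_{n∈ℤ} ⟨n⟩^{−2σ} |a_n|² )^{1/2} ( Σ_{n∈ℤ} ⟨n⟩^{−2σ} |b_n|² )^{1/2}. -/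

import Mathlib

open Real MeasureTheory

noncomputable section

def jb (x : ℝ) : ℝ := (1 + x ^ 2) ^ ((1:ℝ)/2)

/-- The Fourier transform `ĉ(τ) = ∫_ℝ c(t) e^{−itτ} dt` of an integrable
function on the line. -/
def ftR (c : ℝ → ℂ) (τ : ℝ) : ℂ :=
  ∫ t : ℝ, c t * Complex.exp (-(Complex.I * t * τ))

lemma jb_pos (x : ℝ) : 0 < jb x := Real.rpow_pos_of_pos (by positivity) _

lemma jb_sqrt (x : ℝ) : jb x = Real.sqrt (1 + x ^ 2) := by
  rw [jb, Real.sqrt_eq_rpow]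

lemma one_le_jb (x : ℝ) : 1 ≤ jb x := by
  calc (1:ℝ) = 1 ^ ((1:ℝ)/2) := (Real.one_rpow _).symm
  _ ≤ jb x := Real.rpow_le_rpow (by norm_num) (by nlinarith [sq_nonneg x]) (by norm_num)

lemma jb_mono {x y : ℝ} (h : |x| ≤ |y|) : jb x ≤ jb y := by
  have hx : x ^ 2 ≤ y ^ 2 := by
    have := pow_le_pow_left₀ (abs_nonneg x) h 2
    simpa [sq_abs] using this
  exact Real.rpow_le_rpow (by positivity) (by linarith) (by norm_num)

lemma abs_le_jb (x : ℝ) : |x| ≤ jb x := by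
  rw [jb_sqrt, ← Real.sqrt_sq_eq_abs]
  exact Real.sqrt_le_sqrt (by linarith)

lemma jb_le_two_mul {x : ℝ} (h : 1 ≤ x) : jb x ≤ 2 * x := by
  rw [jb_sqrt]
  have h2 : (2*x) = Real.sqrt ((2*x)^2) := (Real.sqrt_sq (by linarith)).symm
  rw [h2]
  exact Real.sqrt_le_sqrt (by nlinarith)

lemma jb_even (x : ℝ) : jb (-x) = jb x := by rw [jb, jb]; ring_nf

lemma jb_abs (x : ℝ) : jb |x| = jb x := by rw [jb, jb, sq_abs]

lemma rpow_anti {u v t : ℝ} (hu : 0 < u) (huv : u ≤ v) (ht : 0 ≤ t) :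
    v ^ (-t) ≤ u ^ (-t) := by
  rw [Real.rpow_neg (by linarith), Real.rpow_neg hu.le]
  exact inv_anti₀ (Real.rpow_pos_of_pos hu t) (Real.rpow_le_rpow hu.le huv ht)

lemma rpow_gap {α : ℝ} (hα : 1 < α) {p q : ℝ} (hp : 0 < p) (hpq : p < q) :
    α * p ^ (α - 1) * (q - p) ≤ q ^ α - p ^ α := by
  obtain ⟨ξ, hξ, hderiv⟩ := exists_hasDerivAt_eq_slope (fun x : ℝ => x ^ α)
      (fun x : ℝ => α * x ^ (α - 1)) hpq
      (fun x hx => (Real.continuousAt_rpow_const x α (Or.inr (by linarith))).continuousWithinAt)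
      (fun x hx => Real.hasDerivAt_rpow_const (Or.inl (by linarith [hx.1] : x ≠ 0)))
  have hq : q - p > 0 := by linarith
  rw [eq_div_iff (by linarith : q - p ≠ 0)] at hderiv
  have hξp : p ^ (α - 1) ≤ ξ ^ (α - 1) := Real.rpow_le_rpow hp.le hξ.1.le (by linarith)
  have hα0 : (0:ℝ) < α := by linarith
  have h2 := mul_le_mul_of_nonneg_left (mul_le_mul_of_nonneg_right hξp hq.le) hα0.le
  nlinarith [h2]

lemma gapA {α : ℝ} (hα : 1 < α) : ∃ c : ℝ, 0 < c ∧ ∀ p q : ℝ, 0 ≤ p → p + 1 ≤ q →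
    c * ((q - p) * q ^ (α - 1)) ≤ q ^ α - p ^ α := by
  have h2a : (0:ℝ) < (2:ℝ)⁻¹ ^ α := Real.rpow_pos_of_pos (by norm_num) _
  have h2b : (0:ℝ) < (2:ℝ)⁻¹ ^ (α-1) := Real.rpow_pos_of_pos (by norm_num) _
  have h2lt : (2:ℝ)⁻¹ ^ α < 1 := Real.rpow_lt_one (by norm_num) (by norm_num) (by linarith)
  refine ⟨min (1 - (2:ℝ)⁻¹ ^ α) (α * (2:ℝ)⁻¹ ^ (α-1)), lt_min (by linarith) (by nlinarith), fun p q hp hpq1 => ?_⟩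
  have hq1 : (1:ℝ) ≤ q := by linarith
  have hq0 : (0:ℝ) < q := by linarith
  have hE : (0:ℝ) < q ^ (α - 1) := Real.rpow_pos_of_pos hq0 _
  have hqq : q * q ^ (α - 1) = q ^ α := by
    rw [show α = 1 + (α - 1) by ring, Real.rpow_add hq0, Real.rpow_one]
    ring_nf
  rcases le_or_gt p (q/2) with hple | hplt
  · -- p small
    have hpa : p ^ α ≤ (q/2) ^ α := Real.rpow_le_rpow hp hple (by linarith)
    have hh : (q/2) ^ α = q ^ α * (2:ℝ)⁻¹ ^ α := by
      rw [show q/2 = q * 2⁻¹ by ring, Real.mul_rpow hq0.le (by norm_num)]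
    have hDE : (q - p) * q ^ (α - 1) ≤ q ^ α := by
      rw [← hqq]
      have : q - p ≤ q := by linarith
      exact mul_le_mul_of_nonneg_right this hE.le
    have hmin := min_le_left (1 - (2:ℝ)⁻¹ ^ α) (α * (2:ℝ)⁻¹ ^ (α-1))
    have hqa : (0:ℝ) < q ^ α := Real.rpow_pos_of_pos hq0 _
    have hDE0 : (0:ℝ) ≤ (q - p) * q ^ (α - 1) := by
      apply mul_nonneg (by linarith) hE.le
    nlinarith [mul_le_mul_of_nonneg_right hmin hDE0]
  · -- p close to q
    have hp0 : (0:ℝ) < p := by linarith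
    have hgap := rpow_gap hα hp0 (by linarith : p < q)
    have hpa : (q/2) ^ (α-1) ≤ p ^ (α-1) := Real.rpow_le_rpow (by linarith) hplt.le (by linarith)
    have hh : (q/2) ^ (α-1) = q ^ (α-1) * (2:ℝ)⁻¹ ^ (α-1) := by
      rw [show q/2 = q * 2⁻¹ by ring, Real.mul_rpow hq0.le (by norm_num)]
    have hmin := min_le_right (1 - (2:ℝ)⁻¹ ^ α) (α * (2:ℝ)⁻¹ ^ (α-1))
    have hD0 : (0:ℝ) ≤ q - p := by linarith
    have key : α * (q ^ (α-1) * (2:ℝ)⁻¹ ^ (α-1)) * (q - p) ≤ α * p ^ (α-1) * (q-p) := by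
      apply mul_le_mul_of_nonneg_right _ hD0
      apply mul_le_mul_of_nonneg_left _ (by linarith : (0:ℝ) ≤ α)
      rw [← hh]; exact hpa
    nlinarith [mul_le_mul_of_nonneg_right hmin (mul_nonneg hD0 hE.le)]

lemma key_real {α : ℝ} (hα : 1 < α) : ∃ c : ℝ, 0 < c ∧ ∀ x y : ℝ, |x| + 1 ≤ |y| →
    c * (jb (|y| - |x|) * (jb x * jb y) ^ ((α-1)/2)) ≤ jb (|y| ^ α - |x| ^ α) := by
  obtain ⟨c₂, hc₂, hA⟩ := gapA hα
  have h2 : (0:ℝ) < (2:ℝ) ^ α := Real.rpow_pos_of_pos (by norm_num) _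
  have h2' : (0:ℝ) < (2:ℝ) ^ (α-1) := Real.rpow_pos_of_pos (by norm_num) _
  refine ⟨c₂ / 2 ^ α, by positivity, fun x y hxy => ?_⟩
  set p := |x| with hpdef
  set q := |y| with hqdef
  have hp : 0 ≤ p := abs_nonneg x
  have hq1 : (1:ℝ) ≤ q := by linarith
  have hq0 : (0:ℝ) < q := by linarith
  have hD1 : (1:ℝ) ≤ q - p := by linarith
  have hE : (0:ℝ) < q ^ (α - 1) := Real.rpow_pos_of_pos hq0 _
  -- bound jb (q-p)
  have hjbD : jb (q - p) ≤ 2 * (q - p) := jb_le_two_mul hD1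
  -- bound (jb x * jb y)^((α-1)/2) ≤ (2*q)^(α-1)
  have hjbx : jb x ≤ jb y := jb_mono (show |x| ≤ |y| by rw [← hpdef, ← hqdef]; linarith)
  have hjy2 : jb x * jb y ≤ jb y ^ (2:ℕ) := by
    rw [sq]; exact mul_le_mul_of_nonneg_right hjbx (jb_pos y).le
  have hstep : (jb x * jb y) ^ ((α-1)/2) ≤ jb y ^ (α - 1) := by
    calc (jb x * jb y) ^ ((α-1)/2) ≤ (jb y ^ (2:ℕ)) ^ ((α-1)/2) :=
          Real.rpow_le_rpow (mul_nonneg (jb_pos x).le (jb_pos y).le) hjy2 (by linarith)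
    _ = jb y ^ (α - 1) := by
        rw [← Real.rpow_natCast (jb y) 2, ← Real.rpow_mul (jb_pos y).le]
        norm_num
        congr 1
        ring
  have hjy : jb y ≤ 2 * q := by
    rw [← jb_abs y]; exact jb_le_two_mul hq1
  have hjya : jb y ^ (α-1) ≤ (2*q) ^ (α-1) :=
    Real.rpow_le_rpow (jb_pos y).le hjy (by linarith)
  have h2q : (2*q) ^ (α-1) = 2 ^ (α-1) * q ^ (α-1) := Real.mul_rpow (by norm_num) hq0.le
  have h2aa : (2:ℝ) ^ α = 2 * 2 ^ (α-1) := by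
    nth_rewrite 1 [show α = 1 + (α - 1) by ring]
    rw [Real.rpow_add (by norm_num : (0:ℝ) < 2), Real.rpow_one]
  have hAq := hA p q hp hxy
  have hchain : jb (q - p) * (jb x * jb y) ^ ((α-1)/2) ≤ (2*(q-p)) * (2 ^ (α-1) * q ^ (α-1)) := by
    apply mul_le_mul hjbD _ (Real.rpow_nonneg (mul_nonneg (jb_pos x).le (jb_pos y).le) _) (by linarith)
    calc (jb x * jb y) ^ ((α-1)/2) ≤ jb y ^ (α-1) := hstep
    _ ≤ (2*q) ^ (α-1) := hjya
    _ = 2 ^ (α-1) * q ^ (α-1) := h2q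
  calc c₂ / 2 ^ α * (jb (q - p) * (jb x * jb y) ^ ((α-1)/2))
      ≤ c₂ / 2 ^ α * ((2*(q-p)) * (2 ^ (α-1) * q ^ (α-1))) := by
        apply mul_le_mul_of_nonneg_left hchain (le_of_lt (div_pos hc₂ h2))
  _ = c₂ * ((q - p) * q ^ (α-1)) := by
        rw [h2aa]; field_simp
  _ ≤ q ^ α - p ^ α := hAq
  _ ≤ jb (q ^ α - p ^ α) := le_trans (le_abs_self _) (abs_le_jb _)

lemma key_int {α σ : ℝ} (hα : 1 < α) (hσ : 0 < σ) : ∃ c₁ : ℝ, 0 < c₁ ∧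
    ∀ n₁ n₂ : ℤ, n₂ ≠ n₁ → n₂ ≠ -n₁ →
    jb (|(n₂:ℝ)| ^ α - |(n₁:ℝ)| ^ α) ^ (-(2*σ/(α-1))) ≤
      c₁ * (jb (|(n₂:ℝ)| - |(n₁:ℝ)|) ^ (-(2*σ/(α-1))) *
        (jb (n₁:ℝ) ^ (-σ) * jb (n₂:ℝ) ^ (-σ))) := by
  obtain ⟨c, hc, hkey⟩ := key_real hα
  set s := 2*σ/(α-1) with hsdef
  have hα1 : (0:ℝ) < α - 1 := by linarith
  have hs : 0 < s := by rw [hsdef]; positivity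
  refine ⟨c ^ (-s), Real.rpow_pos_of_pos hc _, fun n₁ n₂ hne hne' => ?_⟩
  -- generic step: from the key_real inequality, invert with exponent -s
  have main : ∀ x y : ℝ, |x| + 1 ≤ |y| →
      jb (|y| ^ α - |x| ^ α) ^ (-s) ≤
        c ^ (-s) * (jb (|y| - |x|) ^ (-s) * (jb x ^ (-σ) * jb y ^ (-σ))) := by
    intro x y hxy
    have hX : (0:ℝ) < jb (|y| - |x|) * (jb x * jb y) ^ ((α-1)/2) := by
      apply mul_pos (jb_pos _) (Real.rpow_pos_of_pos (mul_pos (jb_pos x) (jb_pos y)) _)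
    have h1 := hkey x y hxy
    have h2 : jb (|y| ^ α - |x| ^ α) ^ (-s) ≤
        (c * (jb (|y| - |x|) * (jb x * jb y) ^ ((α-1)/2))) ^ (-s) :=
      rpow_anti (mul_pos hc hX) h1 hs.le
    refine h2.trans (le_of_eq ?_)
    rw [Real.mul_rpow hc.le hX.le, Real.mul_rpow (jb_pos _).le
      (Real.rpow_nonneg (mul_nonneg (jb_pos x).le (jb_pos y).le) _),
      ← Real.rpow_mul (mul_nonneg (jb_pos x).le (jb_pos y).le),
      show (α-1)/2 * (-s) = -σ by rw [hsdef]; field_simp,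
      Real.mul_rpow (jb_pos x).le (jb_pos y).le]
  -- |n₁| ≠ |n₂| as integers
  have habs : |n₁| ≠ |n₂| := by
    intro h
    rcases abs_eq_abs.mp h with h' | h'
    · exact hne h'.symm
    · exact hne' (by omega)
  rcases lt_or_gt_of_ne habs with hlt | hlt
  · have h1 : |n₁| + 1 ≤ |n₂| := by omega
    have h1' : |(n₁:ℝ)| + 1 ≤ |(n₂:ℝ)| := by
      have := (@Int.cast_le ℝ _ _ _).mpr h1
      push_cast at this
      simpa using this
    exact main (n₁:ℝ) (n₂:ℝ) h1'
  · have h1 : |n₂| + 1 ≤ |n₁| := by omega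
    have h1' : |(n₂:ℝ)| + 1 ≤ |(n₁:ℝ)| := by
      have := (@Int.cast_le ℝ _ _ _).mpr h1
      push_cast at this
      simpa using this
    have hm := main (n₂:ℝ) (n₁:ℝ) h1'
    have e1 : jb (|(n₁:ℝ)| ^ α - |(n₂:ℝ)| ^ α) = jb (|(n₂:ℝ)| ^ α - |(n₁:ℝ)| ^ α) := by
      rw [show |(n₁:ℝ)| ^ α - |(n₂:ℝ)| ^ α = -(|(n₂:ℝ)| ^ α - |(n₁:ℝ)| ^ α) by ring, jb_even]
    have e2 : jb (|(n₁:ℝ)| - |(n₂:ℝ)|) = jb (|(n₂:ℝ)| - |(n₁:ℝ)|) := by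
      rw [show |(n₁:ℝ)| - |(n₂:ℝ)| = -(|(n₂:ℝ)| - |(n₁:ℝ)|) by ring, jb_even]
    rw [e1, e2] at hm
    refine hm.trans (le_of_eq (by ring))


open scoped ENNReal

lemma cs_tsum {ι : Type*} [Countable ι] (f g : ι → ℝ≥0∞) :
    ∑' i, f i * g i ≤ (∑' i, f i ^ 2) ^ ((1:ℝ)/2) * (∑' i, g i ^ 2) ^ ((1:ℝ)/2) := by
  letI : MeasurableSpace ι := ⊤
  haveI : MeasurableSingletonClass ι := ⟨fun _ => trivial⟩
  have hpq : (2:ℝ).HolderConjugate 2 := Real.HolderConjugate.two_two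
  have hmf : Measurable f := fun s _ => trivial
  have hmg : Measurable g := fun s _ => trivial
  have h := ENNReal.lintegral_mul_le_Lp_mul_Lq (Measure.count : Measure ι) hpq
      hmf.aemeasurable hmg.aemeasurable
  have hconv : ∀ z : ℝ≥0∞, z ^ (2:ℝ) = z ^ (2:ℕ) := fun z => by
    rw [← ENNReal.rpow_natCast]; norm_num
  simp only [Pi.mul_apply, lintegral_count, hconv] at h
  exact h

lemma summable_jb_neg {t : ℝ} (ht : 1 < t) : Summable (fun k : ℤ => jb (k:ℝ) ^ (-t)) := by
  have h := Real.summable_abs_int_rpow ht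
  have h0 : Summable (fun k : ℤ => if k = 0 then (1:ℝ) else 0) := (hasSum_ite_eq 0 1).summable
  apply Summable.of_nonneg_of_le (fun k => Real.rpow_nonneg (jb_pos _).le _) _ (h.add h0)
  intro k
  by_cases hk : k = 0
  · subst hk
    have hjb0 : jb ((0:ℤ):ℝ) = 1 := by rw [jb]; norm_num
    rw [hjb0]
    simp [Real.zero_rpow (by linarith : -t ≠ 0)]
  · have h1 : (1:ℝ) ≤ |(k:ℝ)| := by
      have h2 : (1:ℤ) ≤ |k| := Int.one_le_abs (by omega)
      have := (@Int.cast_le ℝ _ _ _).mpr h2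
      push_cast at this
      simpa using this
    have : jb (k:ℝ) ^ (-t) ≤ |(k:ℝ)| ^ (-t) :=
      rpow_anti (by linarith) (abs_le_jb _) (by linarith)
    simp only [hk, if_false]
    linarith

lemma half_half (A : ℝ≥0∞) : A ^ ((1:ℝ)/2) * A ^ ((1:ℝ)/2) = A := by
  calc A ^ ((1:ℝ)/2) * A ^ ((1:ℝ)/2) = (A ^ ((1:ℝ)/2)) ^ (2:ℕ) := (sq _).symm
  _ = (A ^ ((1:ℝ)/2)) ^ ((2:ℕ):ℝ) := (ENNReal.rpow_natCast _ 2).symm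
  _ = A ^ ((1:ℝ)/2 * 2) := by rw [← ENNReal.rpow_mul]; norm_num
  _ = A := by norm_num


/-- Bilinear smoothing estimate for the fractional Schrödinger equation on the
circle, written in Fourier variables: with `s = 2σ/(α−1)` and
`Γ_n = sup_τ ⟨τ⟩^s |ĉ_n(τ)|`,
`Σ_{n₁ ≠ n₂} |ĉ_{n₂−n₁}(|n₂|^α − |n₁|^α)| |a_{n₁}| |b_{n₂}|` is bounded by
`C (sup_n ⟨n⟩^{2σ} Γ_n + (Σ ⟨n⟩^{2λ} Γ_n²)^{1/2})
  (Σ ⟨n⟩^{−2σ}|a_n|²)^{1/2} (Σ ⟨n⟩^{−2σ}|b_n|²)^{1/2}`. -/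
theorem bilinear_smoothing_estimate
    (α σ lam : ℝ) (hα : 1 < α) (hσ : 0 < σ) (hlam : 0 ≤ lam)
    (hls : 1 / 2 < lam + 2 * σ / (α - 1)) :
    ∃ C : ℝ, 0 < C ∧
      ∀ c : ℤ → ℝ → ℂ, (∀ n, Integrable (c n)) →
      ∀ a b : ℤ → ℂ,
        Summable (fun n : ℤ => jb (n : ℝ) ^ (-(2 * σ)) * ‖a n‖ ^ 2) →
        Summable (fun n : ℤ => jb (n : ℝ) ^ (-(2 * σ)) * ‖b n‖ ^ 2) →
        ∑' p : ℤ × ℤ,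
            (if p.1 ≠ p.2 then
              ENNReal.ofReal
                (‖ftR (c (p.2 - p.1)) (|(p.2 : ℝ)| ^ α - |(p.1 : ℝ)| ^ α)‖
                  * ‖a p.1‖ * ‖b p.2‖)
            else 0)
          ≤ ENNReal.ofReal C *
            ((⨆ n : ℤ, ENNReal.ofReal (jb (n : ℝ) ^ (2 * σ)) *
                (⨆ τ : ℝ, ENNReal.ofReal
                  (jb τ ^ (2 * σ / (α - 1)) * ‖ftR (c n) τ‖)))
              + (∑' n : ℤ, ENNReal.ofReal (jb (n : ℝ) ^ (2 * lam)) *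
                  (⨆ τ : ℝ, ENNReal.ofReal
                    (jb τ ^ (2 * σ / (α - 1)) * ‖ftR (c n) τ‖)) ^ 2)
                ^ ((1:ℝ)/2))
            * ENNReal.ofReal (∑' n : ℤ, jb (n : ℝ) ^ (-(2 * σ)) * ‖a n‖ ^ 2)
                ^ ((1:ℝ)/2)
            * ENNReal.ofReal (∑' n : ℤ, jb (n : ℝ) ^ (-(2 * σ)) * ‖b n‖ ^ 2)
                ^ ((1:ℝ)/2) := by
  have hα1 : (0:ℝ) < α - 1 := by linarith
  have hs : 0 < 2 * σ / (α - 1) := by positivity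
  obtain ⟨c₁, hc₁, hkey⟩ := key_int hα hσ
  have hθ1 : (1:ℝ) < 2 * (lam + 2 * σ / (α - 1)) := by linarith
  have hwsummable : Summable (fun k : ℤ => jb (k:ℝ) ^ (-(2 * (lam + 2 * σ / (α - 1))))) :=
    summable_jb_neg hθ1
  set W₀ := ∑' k : ℤ, jb (k:ℝ) ^ (-(2 * (lam + 2 * σ / (α - 1)))) with hW₀def
  have hW₀0 : 0 ≤ W₀ := tsum_nonneg (fun k => Real.rpow_nonneg (jb_pos _).le _)
  have hcW : 0 ≤ c₁ * W₀ ^ ((1:ℝ)/2) := mul_nonneg hc₁.le (Real.rpow_nonneg hW₀0 _)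
  refine ⟨1 + 2 * (c₁ * W₀ ^ ((1:ℝ)/2)), by linarith, ?_⟩
  intro c hcint a b ha hb
  set Γ : ℤ → ℝ≥0∞ := fun n =>
    ⨆ τ : ℝ, ENNReal.ofReal (jb τ ^ (2 * σ / (α - 1)) * ‖ftR (c n) τ‖) with hΓdef
  set Sv : ℝ≥0∞ := ⨆ n : ℤ, ENNReal.ofReal (jb (n : ℝ) ^ (2 * σ)) * Γ n with hSdef
  set T2 : ℝ≥0∞ := ∑' n : ℤ, ENNReal.ofReal (jb (n : ℝ) ^ (2 * lam)) * Γ n ^ 2 with hT2def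
  set G : ℤ → ℝ≥0∞ := fun m => ENNReal.ofReal (jb (m:ℝ) ^ lam) * Γ m with hGdef
  set w : ℤ → ℝ≥0∞ := fun k =>
    ENNReal.ofReal (jb (k:ℝ) ^ (-(lam + 2 * σ / (α - 1)))) with hwdef
  set x : ℤ → ℝ≥0∞ := fun n => ENNReal.ofReal (jb (n:ℝ) ^ (-σ) * ‖a n‖) with hxdef
  set y : ℤ → ℝ≥0∞ := fun n => ENNReal.ofReal (jb (n:ℝ) ^ (-σ) * ‖b n‖) with hydef
  have hcancel : ∀ u t : ℝ, 0 < u →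
      ENNReal.ofReal (u ^ (-t)) * ENNReal.ofReal (u ^ t) = 1 := by
    intro u t hu
    rw [← ENNReal.ofReal_mul (Real.rpow_nonneg hu.le _), ← Real.rpow_add hu,
      neg_add_cancel, Real.rpow_zero, ENNReal.ofReal_one]
  have hF1 : ∀ (m : ℤ) (τ : ℝ), ENNReal.ofReal ‖ftR (c m) τ‖ ≤
      ENNReal.ofReal (jb τ ^ (-(2 * σ / (α - 1)))) * Γ m := by
    intro m τ
    have heq : ENNReal.ofReal ‖ftR (c m) τ‖ =
        ENNReal.ofReal (jb τ ^ (-(2 * σ / (α - 1)))) *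
          ENNReal.ofReal (jb τ ^ (2 * σ / (α - 1)) * ‖ftR (c m) τ‖) := by
      rw [← ENNReal.ofReal_mul (Real.rpow_nonneg (jb_pos τ).le _), ← mul_assoc,
        ← Real.rpow_add (jb_pos τ), neg_add_cancel, Real.rpow_zero, one_mul]
    rw [heq]
    exact mul_le_mul_right
      (le_iSup (fun τ' => ENNReal.ofReal (jb τ' ^ (2 * σ / (α - 1)) * ‖ftR (c m) τ'‖)) τ) _
  have hF2 : ∀ m : ℤ, Γ m ≤ ENNReal.ofReal (jb (m:ℝ) ^ (-(2 * σ))) * Sv := by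
    intro m
    have h := le_iSup (fun n : ℤ => ENNReal.ofReal (jb (n : ℝ) ^ (2 * σ)) * Γ n) m
    calc Γ m = 1 * Γ m := (one_mul _).symm
    _ = (ENNReal.ofReal (jb (m:ℝ) ^ (-(2 * σ))) * ENNReal.ofReal (jb (m:ℝ) ^ (2 * σ))) * Γ m := by
        rw [hcancel _ _ (jb_pos _)]
    _ = ENNReal.ofReal (jb (m:ℝ) ^ (-(2 * σ))) * (ENNReal.ofReal (jb (m:ℝ) ^ (2 * σ)) * Γ m) :=
        mul_assoc _ _ _
    _ ≤ _ := mul_le_mul_right h _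
  have hF3 : ∀ m : ℤ, Γ m = ENNReal.ofReal (jb (m:ℝ) ^ (-lam)) * G m := by
    intro m
    calc Γ m = 1 * Γ m := (one_mul _).symm
    _ = (ENNReal.ofReal (jb (m:ℝ) ^ (-lam)) * ENNReal.ofReal (jb (m:ℝ) ^ lam)) * Γ m := by
        rw [hcancel _ _ (jb_pos _)]
    _ = _ := mul_assoc _ _ _
  set E : ℤ × ℤ → ℝ≥0∞ := fun p => if p.2 = -p.1 then x p.1 * y p.2 else 0 with hEdef
  have hpt : ∀ p : ℤ × ℤ,
      (if p.1 ≠ p.2 then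
        ENNReal.ofReal
          (‖ftR (c (p.2 - p.1)) (|(p.2 : ℝ)| ^ α - |(p.1 : ℝ)| ^ α)‖
            * ‖a p.1‖ * ‖b p.2‖)
      else 0) ≤ Sv * E p +
        (ENNReal.ofReal c₁ * ((G (p.2 - p.1) * w (p.2 - p.1)) * (x p.1 * y p.2)) +
         ENNReal.ofReal c₁ * ((G (p.2 - p.1) * w (p.2 + p.1)) * (x p.1 * y p.2))) := by
    rintro ⟨n₁, n₂⟩
    by_cases h12 : n₁ = n₂
    · simp [h12]
    rw [if_pos (h12 : ¬ n₁ = n₂)]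
    have hsplit : ENNReal.ofReal
        (‖ftR (c (n₂ - n₁)) (|(n₂:ℝ)| ^ α - |(n₁:ℝ)| ^ α)‖ * ‖a n₁‖ * ‖b n₂‖)
        = ENNReal.ofReal ‖ftR (c (n₂ - n₁)) (|(n₂:ℝ)| ^ α - |(n₁:ℝ)| ^ α)‖ *
          ENNReal.ofReal ‖a n₁‖ * ENNReal.ofReal ‖b n₂‖ := by
      rw [ENNReal.ofReal_mul (mul_nonneg (norm_nonneg _) (norm_nonneg _)),
        ENNReal.ofReal_mul (norm_nonneg _)]
    rw [hsplit]
    have hxsplit : x n₁ = ENNReal.ofReal (jb (n₁:ℝ) ^ (-σ)) * ENNReal.ofReal ‖a n₁‖ := by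
      rw [hxdef]
      exact ENNReal.ofReal_mul (Real.rpow_nonneg (jb_pos _).le _)
    have hysplit : y n₂ = ENNReal.ofReal (jb (n₂:ℝ) ^ (-σ)) * ENNReal.ofReal ‖b n₂‖ := by
      rw [hydef]
      exact ENNReal.ofReal_mul (Real.rpow_nonneg (jb_pos _).le _)
    by_cases hanti : n₂ = -n₁
    · have hμ : |(n₂:ℝ)| ^ α - |(n₁:ℝ)| ^ α = 0 := by
        subst hanti; push_cast; rw [abs_neg]; ring
      have h1 : ENNReal.ofReal ‖ftR (c (n₂ - n₁)) (|(n₂:ℝ)| ^ α - |(n₁:ℝ)| ^ α)‖ ≤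
          Γ (n₂ - n₁) := by
        have h := hF1 (n₂ - n₁) (|(n₂:ℝ)| ^ α - |(n₁:ℝ)| ^ α)
        rw [hμ] at h ⊢
        have hjb0 : jb (0:ℝ) = 1 := by rw [jb]; norm_num
        rwa [hjb0, Real.one_rpow, ENNReal.ofReal_one, one_mul] at h
      have h2 : ENNReal.ofReal (jb (((n₂ - n₁ : ℤ)):ℝ) ^ (-(2 * σ))) ≤
          ENNReal.ofReal (jb (n₁:ℝ) ^ (-σ) * jb (n₂:ℝ) ^ (-σ)) := by
        apply ENNReal.ofReal_le_ofReal
        have habs : |(n₂:ℝ)| ≤ |(((n₂ - n₁ : ℤ)):ℝ)| := by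
          subst hanti; push_cast
          rw [abs_neg, show -(n₁:ℝ) - n₁ = -(2 * n₁) by ring, abs_neg, abs_mul]
          have := abs_nonneg (n₁:ℝ)
          rw [show |(2:ℝ)| = 2 by norm_num]
          linarith
        have hj : jb (n₂:ℝ) ≤ jb (((n₂ - n₁ : ℤ)):ℝ) := jb_mono habs
        have heq : jb (n₁:ℝ) = jb (n₂:ℝ) := by
          subst hanti; push_cast; rw [jb_even]
        calc jb (((n₂ - n₁ : ℤ)):ℝ) ^ (-(2 * σ)) ≤ jb (n₂:ℝ) ^ (-(2 * σ)) :=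
            rpow_anti (jb_pos _) hj (by positivity)
        _ = jb (n₁:ℝ) ^ (-σ) * jb (n₂:ℝ) ^ (-σ) := by
            rw [heq, ← Real.rpow_add (jb_pos _)]
            congr 1; ring
      have hEp : E (n₁, n₂) = x n₁ * y n₂ := by rw [hEdef]; exact if_pos hanti
      calc ENNReal.ofReal ‖ftR (c (n₂ - n₁)) (|(n₂:ℝ)| ^ α - |(n₁:ℝ)| ^ α)‖ *
          ENNReal.ofReal ‖a n₁‖ * ENNReal.ofReal ‖b n₂‖
          ≤ (ENNReal.ofReal (jb (((n₂ - n₁ : ℤ)):ℝ) ^ (-(2 * σ))) * Sv) *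
            ENNReal.ofReal ‖a n₁‖ * ENNReal.ofReal ‖b n₂‖ :=
            mul_le_mul_left (mul_le_mul_left (h1.trans (hF2 _)) _) _
      _ ≤ (ENNReal.ofReal (jb (n₁:ℝ) ^ (-σ) * jb (n₂:ℝ) ^ (-σ)) * Sv) *
            ENNReal.ofReal ‖a n₁‖ * ENNReal.ofReal ‖b n₂‖ :=
            mul_le_mul_left (mul_le_mul_left (mul_le_mul_left h2 _) _) _
      _ = Sv * E (n₁, n₂) := by
            rw [hEp, ENNReal.ofReal_mul (Real.rpow_nonneg (jb_pos _).le _), hxsplit, hysplit]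
            ring
      _ ≤ _ := le_self_add
    · have hk := hkey n₁ n₂ (Ne.symm h12) hanti
      have h2 : ENNReal.ofReal (jb (|(n₂:ℝ)| ^ α - |(n₁:ℝ)| ^ α) ^ (-(2 * σ / (α - 1)))) ≤
          ENNReal.ofReal c₁ *
            (ENNReal.ofReal (jb (|(n₂:ℝ)| - |(n₁:ℝ)|) ^ (-(2 * σ / (α - 1)))) *
              (ENNReal.ofReal (jb (n₁:ℝ) ^ (-σ)) * ENNReal.ofReal (jb (n₂:ℝ) ^ (-σ)))) := by
        rw [← ENNReal.ofReal_mul (Real.rpow_nonneg (jb_pos _).le _),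
          ← ENNReal.ofReal_mul (Real.rpow_nonneg (jb_pos _).le _),
          ← ENNReal.ofReal_mul hc₁.le]
        exact ENNReal.ofReal_le_ofReal hk
      have h4 : ENNReal.ofReal (jb (|(n₂:ℝ)| - |(n₁:ℝ)|) ^ (-(2 * σ / (α - 1)))) *
          ENNReal.ofReal (jb (((n₂ - n₁ : ℤ)):ℝ) ^ (-lam)) ≤ w (n₂ - n₁) + w (n₂ + n₁) := by
        have habsle : |(|(n₂:ℝ)| - |(n₁:ℝ)|)| ≤ |(((n₂ - n₁ : ℤ)):ℝ)| := by
          push_cast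
          exact abs_abs_sub_abs_le_abs_sub _ _
        have hb1 : jb (((n₂ - n₁ : ℤ)):ℝ) ^ (-lam) ≤ jb (|(n₂:ℝ)| - |(n₁:ℝ)|) ^ (-lam) :=
          rpow_anti (jb_pos _) (jb_mono habsle) hlam
        have hstep : ENNReal.ofReal (jb (|(n₂:ℝ)| - |(n₁:ℝ)|) ^ (-(2 * σ / (α - 1)))) *
            ENNReal.ofReal (jb (((n₂ - n₁ : ℤ)):ℝ) ^ (-lam)) ≤
            ENNReal.ofReal (jb (|(n₂:ℝ)| - |(n₁:ℝ)|) ^ (-(lam + 2 * σ / (α - 1)))) := by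
          calc ENNReal.ofReal (jb (|(n₂:ℝ)| - |(n₁:ℝ)|) ^ (-(2 * σ / (α - 1)))) *
              ENNReal.ofReal (jb (((n₂ - n₁ : ℤ)):ℝ) ^ (-lam)) ≤
              ENNReal.ofReal (jb (|(n₂:ℝ)| - |(n₁:ℝ)|) ^ (-(2 * σ / (α - 1)))) *
              ENNReal.ofReal (jb (|(n₂:ℝ)| - |(n₁:ℝ)|) ^ (-lam)) :=
                mul_le_mul_right (ENNReal.ofReal_le_ofReal hb1) _
          _ = ENNReal.ofReal (jb (|(n₂:ℝ)| - |(n₁:ℝ)|) ^ (-(lam + 2 * σ / (α - 1)))) := by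
                rw [← ENNReal.ofReal_mul (Real.rpow_nonneg (jb_pos _).le _),
                  ← Real.rpow_add (jb_pos _)]
                congr 2; ring
        refine hstep.trans ?_
        have hdalt : jb (|(n₂:ℝ)| - |(n₁:ℝ)|) = jb (((n₂ - n₁ : ℤ)):ℝ) ∨
            jb (|(n₂:ℝ)| - |(n₁:ℝ)|) = jb (((n₂ + n₁ : ℤ)):ℝ) := by
          rcases abs_cases (n₂:ℝ) with ⟨e2, _⟩ | ⟨e2, _⟩ <;>
            rcases abs_cases (n₁:ℝ) with ⟨e1, _⟩ | ⟨e1, _⟩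
          · left; push_cast; rw [e2, e1]
          · right; push_cast; rw [e2, e1]; congr 1; ring
          · right; push_cast
            rw [e2, e1, show -(n₂:ℝ) - (n₁:ℝ) = -((n₂:ℝ) + (n₁:ℝ)) from by ring, jb_even]
          · left; push_cast
            rw [e2, e1, show -(n₂:ℝ) - -(n₁:ℝ) = -((n₂:ℝ) - (n₁:ℝ)) from by ring, jb_even]
        rcases hdalt with hd | hd
        · rw [hd, hwdef]; exact le_self_add
        · rw [hd, hwdef]; exact le_add_self
      have hμb := hF1 (n₂ - n₁) (|(n₂:ℝ)| ^ α - |(n₁:ℝ)| ^ α)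
      calc ENNReal.ofReal ‖ftR (c (n₂ - n₁)) (|(n₂:ℝ)| ^ α - |(n₁:ℝ)| ^ α)‖ *
          ENNReal.ofReal ‖a n₁‖ * ENNReal.ofReal ‖b n₂‖
          ≤ (ENNReal.ofReal (jb (|(n₂:ℝ)| ^ α - |(n₁:ℝ)| ^ α) ^ (-(2 * σ / (α - 1)))) *
              Γ (n₂ - n₁)) * ENNReal.ofReal ‖a n₁‖ * ENNReal.ofReal ‖b n₂‖ :=
            mul_le_mul_left (mul_le_mul_left hμb _) _
      _ ≤ ((ENNReal.ofReal c₁ *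
            (ENNReal.ofReal (jb (|(n₂:ℝ)| - |(n₁:ℝ)|) ^ (-(2 * σ / (α - 1)))) *
              (ENNReal.ofReal (jb (n₁:ℝ) ^ (-σ)) * ENNReal.ofReal (jb (n₂:ℝ) ^ (-σ))))) *
              Γ (n₂ - n₁)) * ENNReal.ofReal ‖a n₁‖ * ENNReal.ofReal ‖b n₂‖ :=
            mul_le_mul_left (mul_le_mul_left (mul_le_mul_left h2 _) _) _
      _ = ENNReal.ofReal c₁ *
            ((ENNReal.ofReal (jb (|(n₂:ℝ)| - |(n₁:ℝ)|) ^ (-(2 * σ / (α - 1)))) *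
              ENNReal.ofReal (jb (((n₂ - n₁ : ℤ)):ℝ) ^ (-lam))) *
              (G (n₂ - n₁) * (x n₁ * y n₂))) := by
            rw [hF3 (n₂ - n₁), hxsplit, hysplit]
            ring
      _ ≤ ENNReal.ofReal c₁ * ((w (n₂ - n₁) + w (n₂ + n₁)) * (G (n₂ - n₁) * (x n₁ * y n₂))) :=
            mul_le_mul_right (mul_le_mul_left h4 _) _
      _ = ENNReal.ofReal c₁ * ((G (n₂ - n₁) * w (n₂ - n₁)) * (x n₁ * y n₂)) +
          ENNReal.ofReal c₁ * ((G (n₂ - n₁) * w (n₂ + n₁)) * (x n₁ * y n₂)) := by ring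
      _ ≤ _ := le_add_self
  -- summation stage
  have htr1 : ∀ (F : ℤ → ℝ≥0∞) (n₁ : ℤ), (∑' n₂ : ℤ, F (n₂ - n₁)) = ∑' m : ℤ, F m :=
    fun F n₁ => (Equiv.subRight n₁).tsum_eq F
  have htr2 : ∀ (F : ℤ → ℝ≥0∞) (n₂ : ℤ), (∑' n₁ : ℤ, F (n₂ - n₁)) = ∑' m : ℤ, F m :=
    fun F n₂ => (Equiv.subLeft n₂).tsum_eq F
  have htr3 : ∀ (F : ℤ → ℝ≥0∞) (n₂ : ℤ), (∑' n₁ : ℤ, F (n₂ + n₁)) = ∑' m : ℤ, F m :=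
    fun F n₂ => (Equiv.addLeft n₂).tsum_eq F
  have hxsq : (∑' n : ℤ, x n ^ 2) =
      ENNReal.ofReal (∑' n : ℤ, jb (n : ℝ) ^ (-(2 * σ)) * ‖a n‖ ^ 2) := by
    rw [ENNReal.ofReal_tsum_of_nonneg
      (fun n => mul_nonneg (Real.rpow_nonneg (jb_pos _).le _) (sq_nonneg _)) ha]
    apply tsum_congr; intro n
    rw [hxdef, ← ENNReal.ofReal_pow (mul_nonneg (Real.rpow_nonneg (jb_pos _).le _)
      (norm_nonneg _))]
    congr 1
    rw [mul_pow, ← Real.rpow_natCast (jb (n:ℝ) ^ (-σ)) 2, ← Real.rpow_mul (jb_pos _).le,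
      show (-σ) * ((2:ℕ):ℝ) = -(2 * σ) by push_cast; ring]
  have hysq : (∑' n : ℤ, y n ^ 2) =
      ENNReal.ofReal (∑' n : ℤ, jb (n : ℝ) ^ (-(2 * σ)) * ‖b n‖ ^ 2) := by
    rw [ENNReal.ofReal_tsum_of_nonneg
      (fun n => mul_nonneg (Real.rpow_nonneg (jb_pos _).le _) (sq_nonneg _)) hb]
    apply tsum_congr; intro n
    rw [hydef, ← ENNReal.ofReal_pow (mul_nonneg (Real.rpow_nonneg (jb_pos _).le _)
      (norm_nonneg _))]
    congr 1
    rw [mul_pow, ← Real.rpow_natCast (jb (n:ℝ) ^ (-σ)) 2, ← Real.rpow_mul (jb_pos _).le,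
      show (-σ) * ((2:ℕ):ℝ) = -(2 * σ) by push_cast; ring]
  have hGsq : (∑' m : ℤ, G m ^ 2) = T2 := by
    rw [hT2def]
    apply tsum_congr; intro m
    rw [hGdef, mul_pow]
    congr 1
    rw [← ENNReal.ofReal_pow (Real.rpow_nonneg (jb_pos _).le _)]
    congr 1
    rw [← Real.rpow_natCast (jb (m:ℝ) ^ lam) 2, ← Real.rpow_mul (jb_pos _).le,
      show lam * ((2:ℕ):ℝ) = 2 * lam by push_cast; ring]
  have hwsq : (∑' k : ℤ, w k ^ 2) = ENNReal.ofReal W₀ := by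
    rw [hW₀def, ENNReal.ofReal_tsum_of_nonneg
      (fun k => Real.rpow_nonneg (jb_pos _).le _) hwsummable]
    apply tsum_congr; intro k
    rw [hwdef, ← ENNReal.ofReal_pow (Real.rpow_nonneg (jb_pos _).le _)]
    congr 1
    rw [← Real.rpow_natCast (jb (k:ℝ) ^ (-(lam + 2 * σ / (α - 1)))) 2,
      ← Real.rpow_mul (jb_pos _).le,
      show (-(lam + 2 * σ / (α - 1))) * ((2:ℕ):ℝ) = -(2 * (lam + 2 * σ / (α - 1)))
        by push_cast; ring]
  have hEsum : (∑' p : ℤ × ℤ, E p) ≤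
      (∑' n : ℤ, x n ^ 2) ^ ((1:ℝ)/2) * (∑' n : ℤ, y n ^ 2) ^ ((1:ℝ)/2) := by
    have hEeq : (∑' p : ℤ × ℤ, E p) = ∑' n : ℤ, x n * y (-n) := by
      rw [ENNReal.tsum_prod']
      apply tsum_congr; intro n₁
      have hcongr : ∀ n₂ : ℤ, E (n₁, n₂) = (if n₂ = -n₁ then x n₁ * y (-n₁) else 0) := by
        intro n₂
        simp only [hEdef]
        by_cases h : n₂ = -n₁
        · rw [if_pos h, if_pos h, h]
        · rw [if_neg h, if_neg h]
      rw [tsum_congr hcongr, tsum_ite_eq]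
    rw [hEeq]
    refine (cs_tsum _ _).trans (le_of_eq ?_)
    congr 2
    exact (Equiv.neg ℤ).tsum_eq (fun m => y m ^ 2)
  have hΛ₁ : (∑' p : ℤ × ℤ, (G (p.2 - p.1) * w (p.2 - p.1)) * (x p.1 * y p.2)) ≤
      ((∑' m : ℤ, G m ^ 2) ^ ((1:ℝ)/2) * (∑' k : ℤ, w k ^ 2) ^ ((1:ℝ)/2)) *
      ((∑' n : ℤ, x n ^ 2) ^ ((1:ℝ)/2) * (∑' n : ℤ, y n ^ 2) ^ ((1:ℝ)/2)) := by
    have hsp : ∀ p : ℤ × ℤ, (G (p.2 - p.1) * w (p.2 - p.1)) * (x p.1 * y p.2)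
        = ((G (p.2 - p.1) * w (p.2 - p.1)) ^ ((1:ℝ)/2) * x p.1) *
          ((G (p.2 - p.1) * w (p.2 - p.1)) ^ ((1:ℝ)/2) * y p.2) := by
      intro p
      rw [show ((G (p.2 - p.1) * w (p.2 - p.1)) ^ ((1:ℝ)/2) * x p.1) *
          ((G (p.2 - p.1) * w (p.2 - p.1)) ^ ((1:ℝ)/2) * y p.2)
        = ((G (p.2 - p.1) * w (p.2 - p.1)) ^ ((1:ℝ)/2) *
           (G (p.2 - p.1) * w (p.2 - p.1)) ^ ((1:ℝ)/2)) * (x p.1 * y p.2) from by ring,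
        half_half]
    have hf2 : (∑' p : ℤ × ℤ, ((G (p.2 - p.1) * w (p.2 - p.1)) ^ ((1:ℝ)/2) * x p.1) ^ 2)
        = (∑' m : ℤ, G m * w m) * (∑' n : ℤ, x n ^ 2) := by
      calc (∑' p : ℤ × ℤ, ((G (p.2 - p.1) * w (p.2 - p.1)) ^ ((1:ℝ)/2) * x p.1) ^ 2)
          = ∑' p : ℤ × ℤ, (G (p.2 - p.1) * w (p.2 - p.1)) * x p.1 ^ 2 := by
            apply tsum_congr; intro p
            rw [mul_pow, sq ((G (p.2 - p.1) * w (p.2 - p.1)) ^ ((1:ℝ)/2)), half_half]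
      _ = ∑' n₁ : ℤ, ∑' n₂ : ℤ, (G (n₂ - n₁) * w (n₂ - n₁)) * x n₁ ^ 2 := ENNReal.tsum_prod'
      _ = ∑' n₁ : ℤ, (∑' n₂ : ℤ, G (n₂ - n₁) * w (n₂ - n₁)) * x n₁ ^ 2 := by
            apply tsum_congr; intro n₁; exact ENNReal.tsum_mul_right
      _ = ∑' n₁ : ℤ, (∑' m : ℤ, G m * w m) * x n₁ ^ 2 := by
            apply tsum_congr; intro n₁
            rw [htr1 (fun m => G m * w m) n₁]
      _ = (∑' m : ℤ, G m * w m) * (∑' n : ℤ, x n ^ 2) := ENNReal.tsum_mul_left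
    have hg2 : (∑' p : ℤ × ℤ, ((G (p.2 - p.1) * w (p.2 - p.1)) ^ ((1:ℝ)/2) * y p.2) ^ 2)
        = (∑' m : ℤ, G m * w m) * (∑' n : ℤ, y n ^ 2) := by
      calc (∑' p : ℤ × ℤ, ((G (p.2 - p.1) * w (p.2 - p.1)) ^ ((1:ℝ)/2) * y p.2) ^ 2)
          = ∑' p : ℤ × ℤ, (G (p.2 - p.1) * w (p.2 - p.1)) * y p.2 ^ 2 := by
            apply tsum_congr; intro p
            rw [mul_pow, sq ((G (p.2 - p.1) * w (p.2 - p.1)) ^ ((1:ℝ)/2)), half_half]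
      _ = ∑' n₁ : ℤ, ∑' n₂ : ℤ, (G (n₂ - n₁) * w (n₂ - n₁)) * y n₂ ^ 2 := ENNReal.tsum_prod'
      _ = ∑' n₂ : ℤ, ∑' n₁ : ℤ, (G (n₂ - n₁) * w (n₂ - n₁)) * y n₂ ^ 2 := ENNReal.tsum_comm
      _ = ∑' n₂ : ℤ, (∑' n₁ : ℤ, G (n₂ - n₁) * w (n₂ - n₁)) * y n₂ ^ 2 := by
            apply tsum_congr; intro n₂; exact ENNReal.tsum_mul_right
      _ = ∑' n₂ : ℤ, (∑' m : ℤ, G m * w m) * y n₂ ^ 2 := by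
            apply tsum_congr; intro n₂
            rw [htr2 (fun m => G m * w m) n₂]
      _ = (∑' m : ℤ, G m * w m) * (∑' n : ℤ, y n ^ 2) := ENNReal.tsum_mul_left
    calc (∑' p : ℤ × ℤ, (G (p.2 - p.1) * w (p.2 - p.1)) * (x p.1 * y p.2))
        = ∑' p : ℤ × ℤ, ((G (p.2 - p.1) * w (p.2 - p.1)) ^ ((1:ℝ)/2) * x p.1) *
            ((G (p.2 - p.1) * w (p.2 - p.1)) ^ ((1:ℝ)/2) * y p.2) := tsum_congr hsp
    _ ≤ (∑' p : ℤ × ℤ, ((G (p.2 - p.1) * w (p.2 - p.1)) ^ ((1:ℝ)/2) * x p.1) ^ 2) ^ ((1:ℝ)/2) *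
        (∑' p : ℤ × ℤ, ((G (p.2 - p.1) * w (p.2 - p.1)) ^ ((1:ℝ)/2) * y p.2) ^ 2) ^ ((1:ℝ)/2) :=
          cs_tsum _ _
    _ = ((∑' m : ℤ, G m * w m) * (∑' n : ℤ, x n ^ 2)) ^ ((1:ℝ)/2) *
        ((∑' m : ℤ, G m * w m) * (∑' n : ℤ, y n ^ 2)) ^ ((1:ℝ)/2) := by rw [hf2, hg2]
    _ = (∑' m : ℤ, G m * w m) *
        ((∑' n : ℤ, x n ^ 2) ^ ((1:ℝ)/2) * (∑' n : ℤ, y n ^ 2) ^ ((1:ℝ)/2)) := by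
          rw [ENNReal.mul_rpow_of_nonneg _ _ (by norm_num : (0:ℝ) ≤ 1/2),
            ENNReal.mul_rpow_of_nonneg _ _ (by norm_num : (0:ℝ) ≤ 1/2),
            show ((∑' m : ℤ, G m * w m) ^ ((1:ℝ)/2) * (∑' n : ℤ, x n ^ 2) ^ ((1:ℝ)/2)) *
              ((∑' m : ℤ, G m * w m) ^ ((1:ℝ)/2) * (∑' n : ℤ, y n ^ 2) ^ ((1:ℝ)/2))
              = ((∑' m : ℤ, G m * w m) ^ ((1:ℝ)/2) * (∑' m : ℤ, G m * w m) ^ ((1:ℝ)/2)) *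
                ((∑' n : ℤ, x n ^ 2) ^ ((1:ℝ)/2) * (∑' n : ℤ, y n ^ 2) ^ ((1:ℝ)/2))
              from by ring, half_half]
    _ ≤ ((∑' m : ℤ, G m ^ 2) ^ ((1:ℝ)/2) * (∑' k : ℤ, w k ^ 2) ^ ((1:ℝ)/2)) *
        ((∑' n : ℤ, x n ^ 2) ^ ((1:ℝ)/2) * (∑' n : ℤ, y n ^ 2) ^ ((1:ℝ)/2)) :=
          mul_le_mul_left (cs_tsum G w) _
  have hΛ₂ : (∑' p : ℤ × ℤ, (G (p.2 - p.1) * w (p.2 + p.1)) * (x p.1 * y p.2)) ≤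
      ((∑' m : ℤ, G m ^ 2) ^ ((1:ℝ)/2) * (∑' k : ℤ, w k ^ 2) ^ ((1:ℝ)/2)) *
      ((∑' n : ℤ, x n ^ 2) ^ ((1:ℝ)/2) * (∑' n : ℤ, y n ^ 2) ^ ((1:ℝ)/2)) := by
    have hsp : ∀ p : ℤ × ℤ, (G (p.2 - p.1) * w (p.2 + p.1)) * (x p.1 * y p.2)
        = (G (p.2 - p.1) * x p.1) * (w (p.2 + p.1) * y p.2) := by
      intro p; ring
    have hf2 : (∑' p : ℤ × ℤ, (G (p.2 - p.1) * x p.1) ^ 2)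
        = (∑' m : ℤ, G m ^ 2) * (∑' n : ℤ, x n ^ 2) := by
      calc (∑' p : ℤ × ℤ, (G (p.2 - p.1) * x p.1) ^ 2)
          = ∑' p : ℤ × ℤ, G (p.2 - p.1) ^ 2 * x p.1 ^ 2 := by
            apply tsum_congr; intro p; rw [mul_pow]
      _ = ∑' n₁ : ℤ, ∑' n₂ : ℤ, G (n₂ - n₁) ^ 2 * x n₁ ^ 2 := ENNReal.tsum_prod'
      _ = ∑' n₁ : ℤ, (∑' n₂ : ℤ, G (n₂ - n₁) ^ 2) * x n₁ ^ 2 := by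
            apply tsum_congr; intro n₁; exact ENNReal.tsum_mul_right
      _ = ∑' n₁ : ℤ, (∑' m : ℤ, G m ^ 2) * x n₁ ^ 2 := by
            apply tsum_congr; intro n₁
            rw [htr1 (fun m => G m ^ 2) n₁]
      _ = (∑' m : ℤ, G m ^ 2) * (∑' n : ℤ, x n ^ 2) := ENNReal.tsum_mul_left
    have hg2 : (∑' p : ℤ × ℤ, (w (p.2 + p.1) * y p.2) ^ 2)
        = (∑' k : ℤ, w k ^ 2) * (∑' n : ℤ, y n ^ 2) := by
      calc (∑' p : ℤ × ℤ, (w (p.2 + p.1) * y p.2) ^ 2)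
          = ∑' p : ℤ × ℤ, w (p.2 + p.1) ^ 2 * y p.2 ^ 2 := by
            apply tsum_congr; intro p; rw [mul_pow]
      _ = ∑' n₁ : ℤ, ∑' n₂ : ℤ, w (n₂ + n₁) ^ 2 * y n₂ ^ 2 := ENNReal.tsum_prod'
      _ = ∑' n₂ : ℤ, ∑' n₁ : ℤ, w (n₂ + n₁) ^ 2 * y n₂ ^ 2 := ENNReal.tsum_comm
      _ = ∑' n₂ : ℤ, (∑' n₁ : ℤ, w (n₂ + n₁) ^ 2) * y n₂ ^ 2 := by
            apply tsum_congr; intro n₂; exact ENNReal.tsum_mul_right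
      _ = ∑' n₂ : ℤ, (∑' k : ℤ, w k ^ 2) * y n₂ ^ 2 := by
            apply tsum_congr; intro n₂
            rw [htr3 (fun m => w m ^ 2) n₂]
      _ = (∑' k : ℤ, w k ^ 2) * (∑' n : ℤ, y n ^ 2) := ENNReal.tsum_mul_left
    calc (∑' p : ℤ × ℤ, (G (p.2 - p.1) * w (p.2 + p.1)) * (x p.1 * y p.2))
        = ∑' p : ℤ × ℤ, (G (p.2 - p.1) * x p.1) * (w (p.2 + p.1) * y p.2) := tsum_congr hsp
    _ ≤ (∑' p : ℤ × ℤ, (G (p.2 - p.1) * x p.1) ^ 2) ^ ((1:ℝ)/2) *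
        (∑' p : ℤ × ℤ, (w (p.2 + p.1) * y p.2) ^ 2) ^ ((1:ℝ)/2) := cs_tsum _ _
    _ = ((∑' m : ℤ, G m ^ 2) * (∑' n : ℤ, x n ^ 2)) ^ ((1:ℝ)/2) *
        ((∑' k : ℤ, w k ^ 2) * (∑' n : ℤ, y n ^ 2)) ^ ((1:ℝ)/2) := by rw [hf2, hg2]
    _ = ((∑' m : ℤ, G m ^ 2) ^ ((1:ℝ)/2) * (∑' k : ℤ, w k ^ 2) ^ ((1:ℝ)/2)) *
        ((∑' n : ℤ, x n ^ 2) ^ ((1:ℝ)/2) * (∑' n : ℤ, y n ^ 2) ^ ((1:ℝ)/2)) := by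
          rw [ENNReal.mul_rpow_of_nonneg _ _ (by norm_num : (0:ℝ) ≤ 1/2),
            ENNReal.mul_rpow_of_nonneg _ _ (by norm_num : (0:ℝ) ≤ 1/2)]
          ring
  have hQ' : (∑' m : ℤ, G m ^ 2) ^ ((1:ℝ)/2) * (∑' k : ℤ, w k ^ 2) ^ ((1:ℝ)/2)
      = T2 ^ ((1:ℝ)/2) * ENNReal.ofReal (W₀ ^ ((1:ℝ)/2)) := by
    rw [hGsq, hwsq, ENNReal.ofReal_rpow_of_nonneg hW₀0 (by norm_num : (0:ℝ) ≤ 1/2)]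
  have hC1 : (1:ℝ≥0∞) ≤ ENNReal.ofReal (1 + 2 * (c₁ * W₀ ^ ((1:ℝ)/2))) :=
    ENNReal.one_le_ofReal.mpr (by linarith)
  have hC2 : (2:ℝ≥0∞) * (ENNReal.ofReal c₁ * ENNReal.ofReal (W₀ ^ ((1:ℝ)/2))) ≤
      ENNReal.ofReal (1 + 2 * (c₁ * W₀ ^ ((1:ℝ)/2))) := by
    rw [← ENNReal.ofReal_mul hc₁.le, ← ENNReal.ofReal_ofNat 2,
      ← ENNReal.ofReal_mul (by norm_num : (0:ℝ) ≤ 2)]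
    exact ENNReal.ofReal_le_ofReal (by linarith)
  have hfinal : (∑' p : ℤ × ℤ,
      (if p.1 ≠ p.2 then
        ENNReal.ofReal
          (‖ftR (c (p.2 - p.1)) (|(p.2 : ℝ)| ^ α - |(p.1 : ℝ)| ^ α)‖
            * ‖a p.1‖ * ‖b p.2‖)
      else 0))
      ≤ ENNReal.ofReal (1 + 2 * (c₁ * W₀ ^ ((1:ℝ)/2))) * (Sv + T2 ^ ((1:ℝ)/2)) *
        ENNReal.ofReal (∑' n : ℤ, jb (n : ℝ) ^ (-(2 * σ)) * ‖a n‖ ^ 2) ^ ((1:ℝ)/2) *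
        ENNReal.ofReal (∑' n : ℤ, jb (n : ℝ) ^ (-(2 * σ)) * ‖b n‖ ^ 2) ^ ((1:ℝ)/2) := by
    rw [← hxsq, ← hysq]
    calc (∑' p : ℤ × ℤ,
        (if p.1 ≠ p.2 then
          ENNReal.ofReal
            (‖ftR (c (p.2 - p.1)) (|(p.2 : ℝ)| ^ α - |(p.1 : ℝ)| ^ α)‖
              * ‖a p.1‖ * ‖b p.2‖)
        else 0))
        ≤ ∑' p : ℤ × ℤ, (Sv * E p +
          (ENNReal.ofReal c₁ * ((G (p.2 - p.1) * w (p.2 - p.1)) * (x p.1 * y p.2)) +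
           ENNReal.ofReal c₁ * ((G (p.2 - p.1) * w (p.2 + p.1)) * (x p.1 * y p.2)))) :=
          ENNReal.tsum_le_tsum hpt
    _ = Sv * (∑' p : ℤ × ℤ, E p) +
        (ENNReal.ofReal c₁ *
            (∑' p : ℤ × ℤ, (G (p.2 - p.1) * w (p.2 - p.1)) * (x p.1 * y p.2)) +
         ENNReal.ofReal c₁ *
            (∑' p : ℤ × ℤ, (G (p.2 - p.1) * w (p.2 + p.1)) * (x p.1 * y p.2))) := by
        rw [ENNReal.tsum_add, ENNReal.tsum_add, ENNReal.tsum_mul_left,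
          ENNReal.tsum_mul_left, ENNReal.tsum_mul_left]
    _ ≤ Sv * ((∑' n : ℤ, x n ^ 2) ^ ((1:ℝ)/2) * (∑' n : ℤ, y n ^ 2) ^ ((1:ℝ)/2)) +
        (ENNReal.ofReal c₁ *
          ((T2 ^ ((1:ℝ)/2) * ENNReal.ofReal (W₀ ^ ((1:ℝ)/2))) *
            ((∑' n : ℤ, x n ^ 2) ^ ((1:ℝ)/2) * (∑' n : ℤ, y n ^ 2) ^ ((1:ℝ)/2))) +
         ENNReal.ofReal c₁ *
          ((T2 ^ ((1:ℝ)/2) * ENNReal.ofReal (W₀ ^ ((1:ℝ)/2))) *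
            ((∑' n : ℤ, x n ^ 2) ^ ((1:ℝ)/2) * (∑' n : ℤ, y n ^ 2) ^ ((1:ℝ)/2)))) := by
        refine add_le_add (mul_le_mul_right hEsum _) (add_le_add ?_ ?_)
        · exact mul_le_mul_right (hΛ₁.trans (le_of_eq (by rw [hQ']))) _
        · exact mul_le_mul_right (hΛ₂.trans (le_of_eq (by rw [hQ']))) _
    _ = Sv * ((∑' n : ℤ, x n ^ 2) ^ ((1:ℝ)/2) * (∑' n : ℤ, y n ^ 2) ^ ((1:ℝ)/2)) +
        ((2:ℝ≥0∞) * (ENNReal.ofReal c₁ * ENNReal.ofReal (W₀ ^ ((1:ℝ)/2)))) *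
          (T2 ^ ((1:ℝ)/2) *
            ((∑' n : ℤ, x n ^ 2) ^ ((1:ℝ)/2) * (∑' n : ℤ, y n ^ 2) ^ ((1:ℝ)/2))) := by
        ring
    _ ≤ ENNReal.ofReal (1 + 2 * (c₁ * W₀ ^ ((1:ℝ)/2))) *
          (Sv * ((∑' n : ℤ, x n ^ 2) ^ ((1:ℝ)/2) * (∑' n : ℤ, y n ^ 2) ^ ((1:ℝ)/2))) +
        ENNReal.ofReal (1 + 2 * (c₁ * W₀ ^ ((1:ℝ)/2))) *
          (T2 ^ ((1:ℝ)/2) *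
            ((∑' n : ℤ, x n ^ 2) ^ ((1:ℝ)/2) * (∑' n : ℤ, y n ^ 2) ^ ((1:ℝ)/2))) := by
        refine add_le_add ?_ (mul_le_mul_left hC2 _)
        exact le_mul_of_one_le_left zero_le hC1
    _ = ENNReal.ofReal (1 + 2 * (c₁ * W₀ ^ ((1:ℝ)/2))) * (Sv + T2 ^ ((1:ℝ)/2)) *
        (∑' n : ℤ, x n ^ 2) ^ ((1:ℝ)/2) * (∑' n : ℤ, y n ^ 2) ^ ((1:ℝ)/2) := by ring
  simp only [hSdef, hT2def, hΓdef] at hfinal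
  exact hfinal
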